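/- The automorphism group of the stable translation quiver Z[Ã_n] (with Ã_n a non-oriented cycle with n+1 vertices) is {τ^q ∘ α^r : q ∈ Z, 0 ≤ r ≤ n}, where, identifying the vertex set with Z × Z/(n+1), τ(s,[i]) = (s-1,[i]) and α(s,[i]) = (s,[i+1]). In particular the automorphism group is isomorphic to Z × Z/(n+1). -/

import Mathlib

set_option maxHeartbeats 1000000

/-- The arrow relation of the stable translation quiver `ℤ[Ã_n]`: vertices are
`(s, [i]) ∈ ℤ × ℤ/(n+1)`, with arrows `(s,[i]) → (s,[i+1])` and `(s,[i+1]) → (s+1,[i])`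
coming from the cyclically oriented cycle `Ã_n`. -/
def ZAtildeArrow (n : ℕ) (p q : ℤ × ZMod (n + 1)) : Prop :=
  (q.1 = p.1 ∧ q.2 = p.2 + 1) ∨ (q.1 = p.1 + 1 ∧ p.2 = q.2 + 1)

/-- The translation `τ(s,[i]) = (s-1,[i])` of `ℤ[Ã_n]`. -/
def ZAtildeTau (n : ℕ) : Equiv.Perm (ℤ × ZMod (n + 1)) :=
  ⟨fun p => (p.1 - 1, p.2), fun p => (p.1 + 1, p.2),
    fun p => by simp, fun p => by simp⟩

/-- The rotation `α(s,[i]) = (s,[i+1])` of `ℤ[Ã_n]`. -/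
def ZAtildeAlpha (n : ℕ) : Equiv.Perm (ℤ × ZMod (n + 1)) :=
  ⟨fun p => (p.1, p.2 + 1), fun p => (p.1, p.2 - 1),
    fun p => by simp, fun p => by simp⟩

/-! Translating by `(-1, 0)` and by `(0, 1)`, the translation and the rotation generate the
translations of the group `ℤ × ℤ/(n+1)`, and arrows are the differences `(0, 1)` and `(1, -1)`.
An automorphism `f` commutes with `τ`, so it is determined by `g i := f (0, i)`; the arrow
`(0, i) → (0, i+1)` forces the first coordinate of `g` to be non-decreasing around the cycle,
hence constant, and then `g (i + 1) = g i + (0, 1)`, so `f` is the translation by `f 0`. -/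

@[elab_as_elim]
theorem ZMod.induction_on {m : ℕ} [NeZero m] {P : ZMod m → Prop} (i : ZMod m) (zero : P 0)
    (add_one : ∀ i, P i → P (i + 1)) : P i := by
  have hP : ∀ k : ℕ, P k := fun k => Nat.rec (by simpa using zero)
    (fun k hk => by simpa using add_one _ hk) k
  simpa using hP i.val

theorem ZMod.apply_eq_apply_of_forall_le_add_one {m : ℕ} [NeZero m] {α : Type*} [PartialOrder α]
    {g : ZMod m → α} (h : ∀ i, g i ≤ g (i + 1)) (i j : ZMod m) : g i = g j := by
  have hle : ∀ i k, g i ≤ g (i + k) := fun i k =>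
    ZMod.induction_on k (by simp) fun k hk =>
      hk.trans (by simpa [add_assoc] using h (i + k))
  exact le_antisymm (by simpa using hle i (j - i)) (by simpa using hle j (i - j))

namespace ZAtilde

variable {n : ℕ}

theorem tau_eq_addRight : ZAtildeTau n = Equiv.addRight ((-1, 0) : ℤ × ZMod (n + 1)) :=
  Equiv.ext fun _ => Prod.ext (sub_eq_add_neg _ _) (add_zero _).symm

theorem alpha_eq_addRight : ZAtildeAlpha n = Equiv.addRight ((0, 1) : ℤ × ZMod (n + 1)) :=
  Equiv.ext fun _ => Prod.ext (add_zero _).symm rfl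

theorem zpow_tau (q : ℤ) :
    ZAtildeTau n ^ q = Equiv.addRight ((-q, 0) : ℤ × ZMod (n + 1)) := by
  rw [tau_eq_addRight, Equiv.zsmul_addRight]
  ext <;> simp

theorem pow_alpha (r : ℕ) :
    ZAtildeAlpha n ^ r = Equiv.addRight ((0, r) : ℤ × ZMod (n + 1)) := by
  rw [alpha_eq_addRight, Equiv.nsmul_addRight]
  ext <;> simp

theorem zpow_tau_mul_pow_alpha (q : ℤ) (r : ℕ) :
    ZAtildeTau n ^ q * ZAtildeAlpha n ^ r = Equiv.addRight ((-q, r) : ℤ × ZMod (n + 1)) := by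
  rw [zpow_tau, pow_alpha, ← Equiv.addRight_add]
  ext <;> simp

theorem arrow_iff_sub {p q : ℤ × ZMod (n + 1)} :
    ZAtildeArrow n p q ↔ q - p = (0, 1) ∨ q - p = (1, -1) := by
  rw [sub_eq_iff_eq_add', sub_eq_iff_eq_add']
  simp only [ZAtildeArrow, Prod.ext_iff, Prod.fst_add, Prod.snd_add, add_zero, ← sub_eq_add_neg,
    eq_sub_iff_add_eq, eq_comm (a := p.2)]

theorem arrow_add_right_iff {p q : ℤ × ZMod (n + 1)} (v : ℤ × ZMod (n + 1)) :
    ZAtildeArrow n (p + v) (q + v) ↔ ZAtildeArrow n p q := by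
  simp only [arrow_iff_sub, add_sub_add_right_eq_sub]

def IsAut (n : ℕ) (f : Equiv.Perm (ℤ × ZMod (n + 1))) : Prop :=
  (∀ p q, ZAtildeArrow n p q ↔ ZAtildeArrow n (f p) (f q)) ∧
    ∀ p, f (ZAtildeTau n p) = ZAtildeTau n (f p)

theorem isAut_addRight (v : ℤ × ZMod (n + 1)) : IsAut n (Equiv.addRight v) :=
  ⟨fun _ _ => (arrow_add_right_iff v).symm, fun _ => by simp [tau_eq_addRight, add_right_comm]⟩

theorem eq_addRight_of_arrow_of_commute_tau {f : Equiv.Perm (ℤ × ZMod (n + 1))}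
    (harrow : ∀ p q, ZAtildeArrow n p q → ZAtildeArrow n (f p) (f q))
    (htau : Commute f (ZAtildeTau n)) : f = Equiv.addRight (f 0) := by
  set g : ZMod (n + 1) → ℤ × ZMod (n + 1) := fun i => f (0, i)
  have hshift : ∀ s i, f (s, i) = g i + (s, 0) := fun s i => by
    have := Equiv.congr_fun (htau.zpow_right (-s)) (0, i)
    rw [Equiv.Perm.mul_apply, Equiv.Perm.mul_apply, zpow_tau, neg_neg] at this
    simpa using this
  have hstep : ∀ i, g (i + 1) - g i = (0, 1) ∨ g (i + 1) - g i = (1, -1) := fun i =>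
    arrow_iff_sub.1 (harrow _ _ (arrow_iff_sub.2 (Or.inl (by ext <;> simp))))
  have hfst : ∀ i j, (g i).1 = (g j).1 :=
    ZMod.apply_eq_apply_of_forall_le_add_one fun i => by
      rcases hstep i with h | h <;> have := congrArg Prod.fst h <;> simp at this <;> omega
  have hsucc : ∀ i, g (i + 1) = g i + (0, 1) := fun i => by
    rcases hstep i with h | h
    · exact eq_add_of_sub_eq' h
    · have := congrArg Prod.fst h
      simp [hfst (i + 1) i] at this
  have hg : ∀ i, g i = g 0 + (0, i) := fun i =>
    ZMod.induction_on i (by simp) fun i hi => by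
      rw [hsucc, hi, add_assoc, Prod.mk_add_mk (0 : ℤ), add_zero]
  ext ⟨s, i⟩ : 1
  rw [Equiv.coe_addRight, hshift, hg]
  show g 0 + (0, i) + (s, 0) = (s, i) + g 0
  ext <;> simp [add_comm]

theorem isAut_iff_exists_addRight {f : Equiv.Perm (ℤ × ZMod (n + 1))} :
    IsAut n f ↔ ∃ v, f = Equiv.addRight v := by
  refine ⟨fun ⟨harrow, htau⟩ => ⟨f 0, ?_⟩, fun ⟨v, hv⟩ => hv ▸ isAut_addRight v⟩
  exact eq_addRight_of_arrow_of_commute_tau (fun p q => (harrow p q).1) (Equiv.ext htau)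

end ZAtilde

open ZAtilde in
theorem automorphisms_of_ZAtilde_general (n : ℕ) :
    (∀ f : Equiv.Perm (ℤ × ZMod (n + 1)),
      ((∀ p q, ZAtildeArrow n p q ↔ ZAtildeArrow n (f p) (f q)) ∧
        ∀ p, f (ZAtildeTau n p) = ZAtildeTau n (f p)) ↔
      ∃ (q : ℤ) (r : ℕ), r ≤ n ∧ f = ZAtildeTau n ^ q * ZAtildeAlpha n ^ r) ∧
    ZAtildeAlpha n ^ (n + 1) = 1 ∧
    ZAtildeTau n * ZAtildeAlpha n = ZAtildeAlpha n * ZAtildeTau n ∧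
    (∀ (q q' : ℤ) (r r' : ℕ), r ≤ n → r' ≤ n →
      ZAtildeTau n ^ q * ZAtildeAlpha n ^ r = ZAtildeTau n ^ q' * ZAtildeAlpha n ^ r' →
      q = q' ∧ r = r') := by
  refine ⟨fun f => isAut_iff_exists_addRight.trans ⟨?_, ?_⟩, ?_, ?_, ?_⟩
  · rintro ⟨v, rfl⟩
    refine ⟨-v.1, v.2.val, Nat.lt_succ_iff.mp (ZMod.val_lt _), ?_⟩
    rw [zpow_tau_mul_pow_alpha, neg_neg, ZMod.natCast_zmod_val]
  · rintro ⟨q, r, -, rfl⟩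
    exact ⟨_, zpow_tau_mul_pow_alpha q r⟩
  · rw [pow_alpha, ZMod.natCast_self, Prod.mk_zero_zero, Equiv.addRight_zero]
  · simp only [tau_eq_addRight, alpha_eq_addRight, ← Equiv.addRight_add, add_comm]
  · intro q q' r r' hr hr' h
    rw [zpow_tau_mul_pow_alpha, zpow_tau_mul_pow_alpha] at h
    obtain ⟨hq, hrr'⟩ : q = q' ∧ (r : ZMod (n + 1)) = r' := by simpa using Equiv.congr_fun h 0
    refine ⟨hq, ?_⟩
    rwa [ZMod.natCast_eq_natCast_iff', Nat.mod_eq_of_lt (Nat.lt_succ_of_le hr),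
      Nat.mod_eq_of_lt (Nat.lt_succ_of_le hr')] at hrr'

/-- the automorphisms of the stable translation quiver `ℤ[Ã_n]` (bijections
of the vertex set preserving the arrows and commuting with the translation `τ`) are
exactly the `τ^q ∘ α^r` with `q ∈ ℤ`, `0 ≤ r ≤ n`; in particular the automorphism group
is `⟨τ⟩ × ⟨α⟩ ≅ ℤ × ℤ/(n+1)` (note `τ^q α^r = τ^{q'} α^{r'}` with `q ∈ ℤ`, `0 ≤ r ≤ n`
uniquely, `α^{n+1} = 1` and `τα = ατ`). -/
theorem automorphisms_of_ZAtilde (n : ℕ) (hn : 1 ≤ n) :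
    (∀ f : Equiv.Perm (ℤ × ZMod (n + 1)),
      ((∀ p q, ZAtildeArrow n p q ↔ ZAtildeArrow n (f p) (f q)) ∧
        ∀ p, f (ZAtildeTau n p) = ZAtildeTau n (f p)) ↔
      ∃ (q : ℤ) (r : ℕ), r ≤ n ∧ f = ZAtildeTau n ^ q * ZAtildeAlpha n ^ r) ∧
    ZAtildeAlpha n ^ (n + 1) = 1 ∧
    ZAtildeTau n * ZAtildeAlpha n = ZAtildeAlpha n * ZAtildeTau n ∧
    (∀ (q q' : ℤ) (r r' : ℕ), r ≤ n → r' ≤ n →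
      ZAtildeTau n ^ q * ZAtildeAlpha n ^ r = ZAtildeTau n ^ q' * ZAtildeAlpha n ^ r' →
      q = q' ∧ r = r') :=
  automorphisms_of_ZAtilde_general n
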